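/- On the elliptic curve E : y^2 + 5890802·xy + 2706191958366648675·y = x^3 + 3739409500365·x^2 over Q, the point (0,0) has order exactly 5, and each of x = -21207376737 and x = 37660080920 is the x-coordinate of a rational point on E. -/

import Mathlib

/-!
Write `P = (0, 0)`. When `a₄ = a₆ = 0` the tangent at `P` is horizontal, so doubling gives
`2P = (-a₂, a₁a₂ - a₃)`. If moreover `a₃² + a₂³ = a₁a₂a₃` (the curve is then the Tate normal
form `y² + (1 - b)xy - by = x³ - bx²` rescaled by `u = a₃ / a₂`), the tangent at `2P` has slope
`-a₂² / a₃` and doubling again gives `4P = (0, -a₃) = -P`, so `P` has order `5`.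
The curve `E` satisfies this relation, and the two other points are exhibited with explicit
`y`-coordinates.
-/

def E : WeierstrassCurve.Affine ℚ :=
  ⟨5890802, 3739409500365, 2706191958366648675, 0, 0⟩

namespace WeierstrassCurve.Affine

variable {F : Type*} [Field F] [DecidableEq F] {W : Affine F}

lemma exists_some_add_self_eq_of_tangent {x y ℓ x' y' : F} {h : W.Nonsingular x y}
    (hy : y ≠ W.negY x y)
    (hℓ : ℓ * (y - W.negY x y) = 3 * x ^ 2 + 2 * W.a₂ * x + W.a₄ - W.a₁ * y)
    (hx' : x' = W.addX x x ℓ) (hy' : y' = W.addY x x y ℓ) :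
    ∃ h' : W.Nonsingular x' y', Point.some x y h + Point.some x y h = Point.some x' y' h' := by
  have hslope : W.slope x x y y = ℓ := by
    rw [slope_of_Y_ne rfl hy, div_eq_iff (sub_ne_zero.mpr hy), hℓ]
  subst hx' hy' hslope
  exact ⟨_, Point.add_self_of_Y_ne hy⟩

lemma exists_some_zero_zero_add_self (h₄ : W.a₄ = 0) (h₃ : W.a₃ ≠ 0) (hP : W.Nonsingular 0 0) :
    ∃ h' : W.Nonsingular (-W.a₂) (W.a₁ * W.a₂ - W.a₃),
      Point.some 0 0 hP + Point.some 0 0 hP = Point.some _ _ h' :=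
  exists_some_add_self_eq_of_tangent (ℓ := 0) (by simpa [negY, eq_comm] using h₃)
    (by simp [h₄]) (by simp) (by simp [addY, negY])

lemma some_add_self_eq_neg_some_zero_zero (h₄ : W.a₄ = 0) (h₂ : W.a₂ ≠ 0) (h₃ : W.a₃ ≠ 0)
    (h : W.a₃ ^ 2 + W.a₂ ^ 3 = W.a₁ * W.a₂ * W.a₃)
    (hQ : W.Nonsingular (-W.a₂) (W.a₁ * W.a₂ - W.a₃)) (hP : W.Nonsingular 0 0) :
    Point.some _ _ hQ + Point.some _ _ hQ = -Point.some 0 0 hP := by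
  set ℓ := -W.a₂ ^ 2 / W.a₃
  have hY : W.a₁ * W.a₂ - W.a₃ - W.negY (-W.a₂) (W.a₁ * W.a₂ - W.a₃) = W.a₂ ^ 3 / W.a₃ := by
    field_simp
    simp only [negY]
    linear_combination -h
  have hX : W.addX (-W.a₂) (-W.a₂) ℓ = 0 := by
    simp only [addX, ℓ]
    field_simp
    linear_combination W.a₂ * h
  have hN : W.negAddY (-W.a₂) (-W.a₂) (W.a₁ * W.a₂ - W.a₃) ℓ = 0 := by
    rw [negAddY, hX]
    simp only [ℓ]
    field_simp
    linear_combination -h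
  obtain ⟨_, hdouble⟩ := exists_some_add_self_eq_of_tangent (h := hQ) (ℓ := ℓ)
    (by rw [← sub_ne_zero, hY]; positivity)
    (by rw [hY, h₄]; simp only [ℓ]; field_simp; linear_combination -(W.a₂ ^ 2 + W.a₁ * W.a₃) * h)
    hX.symm (by rw [addY, hX, hN])
  rw [hdouble, Point.neg_some]

lemma five_nsmul_some_zero_zero (h₄ : W.a₄ = 0) (h₂ : W.a₂ ≠ 0) (h₃ : W.a₃ ≠ 0)
    (h : W.a₃ ^ 2 + W.a₂ ^ 3 = W.a₁ * W.a₂ * W.a₃) (hP : W.Nonsingular 0 0) :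
    5 • Point.some 0 0 hP = 0 := by
  obtain ⟨hQ, hdouble⟩ := exists_some_zero_zero_add_self h₄ h₃ hP
  have h4 : 4 • Point.some 0 0 hP = -Point.some 0 0 hP := by
    rw [show (4 : ℕ) = 2 + 2 from rfl, add_nsmul, two_nsmul, hdouble,
      some_add_self_eq_neg_some_zero_zero h₄ h₂ h₃ h hQ hP]
  rw [succ_nsmul, h4, neg_add_cancel]

lemma addOrderOf_some_zero_zero (h₄ : W.a₄ = 0) (h₂ : W.a₂ ≠ 0) (h₃ : W.a₃ ≠ 0)
    (h : W.a₃ ^ 2 + W.a₂ ^ 3 = W.a₁ * W.a₂ * W.a₃) (hP : W.Nonsingular 0 0) :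
    addOrderOf (Point.some 0 0 hP) = 5 :=
  haveI : Fact (Nat.Prime 5) := ⟨by norm_num⟩
  addOrderOf_eq_prime (five_nsmul_some_zero_zero h₄ h₂ h₃ h hP) (Point.some_ne_zero hP)

end WeierstrassCurve.Affine

open WeierstrassCurve.Affine in
/-- On `E`, the point `(0,0)` has order exactly 5, and `x = -21207376737` and
`x = 37660080920` are `x`-coordinates of rational points on `E`. -/
theorem order_five_and_points :
    (∃ h : E.Nonsingular 0 0, addOrderOf (WeierstrassCurve.Affine.Point.some _ _ h) = 5) ∧
    (∃ y : ℚ, E.Nonsingular (-21207376737) y) ∧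
    (∃ y : ℚ, E.Nonsingular 37660080920 y) := by
  have hP : E.Nonsingular 0 0 := nonsingular_zero.mpr ⟨rfl, .inl (by norm_num [E])⟩
  refine ⟨⟨hP, addOrderOf_some_zero_zero rfl (by norm_num [E]) (by norm_num [E])
      (by norm_num [E]) hP⟩, ⟨647687622929436, ?_⟩, ⟨1828392221155885, ?_⟩⟩ <;>
  exact (nonsingular_iff _ _).mpr ⟨(equation_iff _ _).mpr (by norm_num [E]), .inr (by norm_num [E])⟩
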